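/- Let Γ be a group with automorphisms α₀, α₁ and G = LΓ ⋊ V the twisted fraction group. For ζ in the center Z(Γ), the formula F_ζ(av) := ζ^{ℓ_v} · a · v, where ℓ_v(x) = log₂(v'(v^{-1}x)) and ζ^{ℓ_v}(x) := ζ^{ℓ_v(x)}, defines an automorphism of G, and ζ ↦ F_ζ is a faithful action of Z(Γ) on G by automorphisms. (Stated for the untwisted case α₀ = α₁ = id_Γ.) -/

import Mathlib

/-! Basic setup: the Cantor space, prefix replacement, Thompson's group `V`,
slopes, dyadic rationals, standard dyadic partitions, locally constant maps,
and the permutation model of the twisted fraction groups `LΓ ⋊ V`. -/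

abbrev Cantor : Type := ℕ → Bool

/-- Concatenation of a finite word with an infinite sequence. -/
def cat (w : List Bool) (x : Cantor) : Cantor :=
  fun n => if n < w.length then w.getD n false else x (n - w.length)

/-- The standard dyadic interval (cylinder) associated to a finite word. -/
def cyl (w : List Bool) : Set Cantor := {x | ∃ y : Cantor, x = cat w y}

/-- Membership in Thompson's group `V`: a homeomorphism of the Cantor space which is
everywhere locally given by prefix replacement. -/
def memV (v : Cantor ≃ₜ Cantor) : Prop :=
  ∀ x : Cantor, ∃ (m w : List Bool) (y : Cantor),
    x = cat m y ∧ ∀ z : Cantor, v (cat m z) = cat w z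

/-- `HasLogSlope v x k` : `k = log₂ v'(x)`, base-2 logarithm of the slope of `v` at `x`. -/
def HasLogSlope (v : Cantor ≃ₜ Cantor) (x : Cantor) (k : ℤ) : Prop :=
  ∃ (m w : List Bool) (y : Cantor),
    x = cat m y ∧ (∀ z : Cantor, v (cat m z) = cat w z) ∧
      k = (m.length : ℤ) - (w.length : ℤ)

open Classical in
noncomputable def logSlope (v : Cantor ≃ₜ Cantor) (x : Cantor) : ℤ :=
  if h : ∃ k : ℤ, HasLogSlope v x k then h.choose else 0

/-- The eventually periodic sequence `c∞ = c·c·c⋯`. -/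
def tailSeq (c : List Bool) : Cantor := fun n => c.getD (n % c.length) false

/-- `x` lies in the tail equivalence class of the word `c`, i.e. `x = y·c∞`. -/
def InTailClass (x : Cantor) (c : List Bool) : Prop :=
  ∃ y : List Bool, x = cat y (tailSeq c)

/-- `x` is eventually periodic (a rational point of the Cantor space). -/
def EvPeriodic (x : Cantor) : Prop :=
  ∃ (y c : List Bool), c ≠ [] ∧ x = cat y (tailSeq c)

/-- A prime word: a nonempty word which is not a proper power of a word. -/
def PrimeWord (c : List Bool) : Prop :=
  c ≠ [] ∧ ∀ (d : List Bool) (k : ℕ), 2 ≤ k → c ≠ (List.replicate k d).flatten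

/-- `conjH φ v = φ ∘ v ∘ φ⁻¹`. -/
def conjH (φ v : Cantor ≃ₜ Cantor) : Cantor ≃ₜ Cantor := φ.symm.trans (v.trans φ)

/-- `φ` normalizes Thompson's group `V` inside `Homeo(𝔠)` : `φ V φ⁻¹ = V`. -/
def NormalizesV (φ : Cantor ≃ₜ Cantor) : Prop :=
  (conjH φ) '' {v | memV v} = {v | memV v}

/-- The copy of the dyadic rationals `Q₂ ⊂ 𝔠` : finitely supported sequences. -/
def InQ2 (x : Cantor) : Prop := ∃ n : ℕ, ∀ m, n ≤ m → x m = false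

def zeroSeq : Cantor := fun _ => false

/-- A standard dyadic partition of the Cantor space. -/
def IsSDP (P : Finset (List Bool)) : Prop :=
  ∀ x : Cantor, ∃! w : List Bool, w ∈ P ∧ x ∈ cyl w

/-- Locally constant map: constant on each piece of some standard dyadic partition. -/
def IsLC {Γ : Type*} (f : Cantor → Γ) : Prop :=
  ∃ P : Finset (List Bool), IsSDP P ∧ ∀ w ∈ P, ∀ y z : Cantor, f (cat w y) = f (cat w z)

/-- `h` agrees on `Q₂` with (the restriction of) a locally constant map. -/
def AgreesOnQ2WithLC {Γ : Type*} (h : Cantor → Γ) : Prop :=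
  ∃ b : Cantor → Γ, IsLC b ∧ ∀ x, InQ2 x → h x = b x

section GroupPart
variable {Γ : Type*} [Group Γ]

/-- `alphaWord α₀ α₁ (m₁⋯m_k) = α_{m_k} ∘ ⋯ ∘ α_{m₁}`. -/
def alphaWord (α₀ α₁ : Γ ≃* Γ) (m : List Bool) : Γ ≃* Γ :=
  m.foldl (fun acc b => acc.trans (if b then α₁ else α₀)) (MulEquiv.refl Γ)

open Classical in
/-- The twisting automorphism `τ_{v,x} = α_{v(I)}⁻¹ ∘ α_I` for a standard dyadic
interval `I` containing `x` and adapted to `v`. -/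
noncomputable def tauEquiv (α₀ α₁ : Γ ≃* Γ) (v : Cantor ≃ₜ Cantor) (x : Cantor) : Γ ≃* Γ :=
  if h : ∃ p : List Bool × List Bool, x ∈ cyl p.1 ∧ ∀ z : Cantor, v (cat p.1 z) = cat p.2 z
  then (alphaWord α₀ α₁ h.choose.1).trans (alphaWord α₀ α₁ h.choose.2).symm
  else MulEquiv.refl Γ

/-- The element `a·v` of the twisted `LΓ ⋊ V`, realized as the permutation
`(x,g) ↦ (v x, a(v x) · τ_{v,x}(g))` of `𝔠 × Γ`. -/
noncomputable def permOf (α₀ α₁ : Γ ≃* Γ) (a : Cantor → Γ) (v : Cantor ≃ₜ Cantor) :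
    Equiv.Perm (Cantor × Γ) where
  toFun p := (v p.1, a (v p.1) * tauEquiv α₀ α₁ v p.1 p.2)
  invFun p := (v.symm p.1, (tauEquiv α₀ α₁ v (v.symm p.1)).symm ((a p.1)⁻¹ * p.2))
  left_inv := by rintro ⟨x, g⟩; simp
  right_inv := by rintro ⟨x, g⟩; simp

end GroupPart

/-- The twisted fraction group `G = LΓ ⋊ V` of the triple `(Γ, α₀, α₁)`,
as a group of permutations of `𝔠 × Γ`. -/
noncomputable def Gsub (Γ : Type*) [Group Γ] (α₀ α₁ : Γ ≃* Γ) :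
    Subgroup (Equiv.Perm (Cantor × Γ)) :=
  Subgroup.closure {p | ∃ a v, IsLC a ∧ memV v ∧ p = permOf α₀ α₁ a v}

/-- The untwisted case `α₀ = α₁ = id`. -/
noncomputable def permOfU {Γ : Type*} [Group Γ] (a : Cantor → Γ) (v : Cantor ≃ₜ Cantor) :=
  permOf (MulEquiv.refl Γ) (MulEquiv.refl Γ) a v

/-- The untwisted fraction group `G = LΓ ⋊ V`. -/
noncomputable def GsubU (Γ : Type*) [Group Γ] := Gsub Γ (MulEquiv.refl Γ) (MulEquiv.refl Γ)

/-- `f ∈ N_{K̄}(G)` : the element `f` of `K̄ = ∏_{Q₂}Γ` normalizes `G = LΓ ⋊ V`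
(untwisted case), i.e. `f·a·(f^v)⁻¹` and `f⁻¹·a·f^v` are locally constant on `Q₂`. -/
def InNormKbar {Γ : Type*} [Group Γ] (f : Cantor → Γ) : Prop :=
  ∀ (a : Cantor → Γ) (v : Cantor ≃ₜ Cantor), IsLC a → memV v →
    AgreesOnQ2WithLC (fun x => f x * a x * (f (v.symm x))⁻¹) ∧
    AgreesOnQ2WithLC (fun x => (f x)⁻¹ * a x * f (v.symm x))

/-!
Every element of `G` has a unique normal form `a·v` with `a` locally constant and `v ∈ V`,
so `F_ζ(a·v) = ζ^{ℓ_v}·a·v` is well defined; it lies in `G` because `ℓ_v` is constant on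
each cylinder on which `v` replaces prefixes. The chain rule `ℓ_{vw} = ℓ_v + ℓ_w^v`, together
with the centrality of `ζ`, makes `F_ζ` multiplicative, and `F_{ζη} = F_ζ ∘ F_η` because
powers of commuting elements multiply. For faithfulness, the involution in `V` exchanging the
cylinders `0` and `11` has slope `1` on `11`, so `F_ζ` fixes it only when `ζ = 1`.
-/

def Cantor.drop (n : ℕ) (x : Cantor) : Cantor := fun k => x (k + n)

theorem cat_apply_of_lt {w : List Bool} {n : ℕ} (x : Cantor) (h : n < w.length) :
    cat w x n = w[n] := by
  simp [cat, h]

theorem cat_apply_length_add (w : List Bool) (x : Cantor) (n : ℕ) :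
    cat w x (w.length + n) = x n := by
  simp [cat]

theorem cat_append (m t : List Bool) (z : Cantor) : cat (m ++ t) z = cat m (cat t z) := by
  funext n
  by_cases h₁ : n < m.length
  · rw [cat_apply_of_lt _ (by simp; omega), cat_apply_of_lt _ h₁, List.getElem_append_left h₁]
  obtain ⟨n, rfl⟩ := Nat.exists_eq_add_of_le (not_lt.1 h₁)
  rw [cat_apply_length_add]
  by_cases h₂ : n < t.length
  · rw [cat_apply_of_lt _ (by simp; omega), cat_apply_of_lt _ h₂,
      List.getElem_append_right (by omega)]
    simp
  obtain ⟨n, rfl⟩ := Nat.exists_eq_add_of_le (not_lt.1 h₂)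
  rw [← add_assoc, ← List.length_append, cat_apply_length_add, cat_apply_length_add]

theorem Cantor.drop_cat (w : List Bool) (z : Cantor) : Cantor.drop w.length (cat w z) = z := by
  funext n
  rw [Cantor.drop, add_comm, cat_apply_length_add]

theorem mem_cyl_iff {w : List Bool} {x : Cantor} :
    x ∈ cyl w ↔ ∀ (i : ℕ) (h : i < w.length), x i = w[i] := by
  refine ⟨fun ⟨y, hy⟩ i hi => hy ▸ cat_apply_of_lt y hi,
    fun h => ⟨Cantor.drop w.length x, ?_⟩⟩
  funext n
  by_cases hn : n < w.length
  · rw [cat_apply_of_lt _ hn, h n hn]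
  · obtain ⟨n, rfl⟩ := Nat.exists_eq_add_of_le (not_lt.1 hn)
    rw [cat_apply_length_add, Cantor.drop, add_comm]

theorem cyl_eq_cylinder (w : List Bool) (z : Cantor) :
    cyl w = PiNat.cylinder (cat w z) w.length := by
  ext x
  simp only [mem_cyl_iff, PiNat.mem_cylinder_iff]
  exact forall₂_congr fun i hi => by rw [cat_apply_of_lt z hi]

theorem isOpen_cyl (w : List Bool) : IsOpen (cyl w) := by
  rw [cyl_eq_cylinder w fun _ => false]
  exact PiNat.isOpen_cylinder _ _ _

theorem eq_and_eq_of_cat_eq_cat {w w' : List Bool} {y y' : Cantor} (h : cat w y = cat w' y')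
    (hl : w.length = w'.length) : w = w' ∧ y = y' := by
  refine ⟨List.ext_getElem hl fun i hi hi' => ?_, funext fun n => ?_⟩
  · rw [← cat_apply_of_lt y hi, ← cat_apply_of_lt y' hi', h]
  · rw [← cat_apply_length_add w y, ← cat_apply_length_add w' y', h, hl]

theorem eq_of_forall_cat_eq {u u' : List Bool} (h : ∀ z : Cantor, cat u z = cat u' z) :
    u = u' := by
  suffices hl : u.length = u'.length from (eq_and_eq_of_cat_eq_cat (h fun _ => false) hl).1
  by_contra hne
  wlog hlt : u.length < u'.length generalizing u u'
  · exact this (fun z => (h z).symm) (Ne.symm hne) (by omega)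
  -- the letter at position `|u|` is read from `z` on the left but from `u'` on the right
  have key (b : Bool) : b = u'[u.length] := by
    rw [← cat_apply_of_lt (fun _ => b) hlt, ← h]
    exact (cat_apply_length_add u (fun _ => b) 0).symm
  exact Bool.noConfusion ((key true).trans (key false).symm)

theorem exists_eq_append_of_cat_eq {m m' : List Bool} {y y' : Cantor}
    (h : cat m y = cat m' y') (hle : m.length ≤ m'.length) :
    ∃ t, m' = m ++ t ∧ y = cat t y' := by
  rw [← List.take_append_drop m.length m', cat_append] at h
  obtain ⟨hm, hy⟩ := eq_and_eq_of_cat_eq_cat h (by simp [hle])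
  refine ⟨m'.drop m.length, ?_, hy⟩
  conv_lhs => rw [← List.take_append_drop m.length m', ← hm]

theorem HasLogSlope.unique {v : Cantor ≃ₜ Cantor} {x : Cantor} {k k' : ℤ}
    (h : HasLogSlope v x k) (h' : HasLogSlope v x k') : k = k' := by
  obtain ⟨m, w, y, hx, hw, rfl⟩ := h
  obtain ⟨m', w', y', hx', hw', rfl⟩ := h'
  wlog hle : m.length ≤ m'.length generalizing m w y m' w' y'
  · exact (this m' w' y' hx' hw' m w y hx hw (by omega)).symm
  obtain ⟨t, rfl, rfl⟩ := exists_eq_append_of_cat_eq (hx.symm.trans hx') hle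
  obtain rfl : w' = w ++ t := eq_of_forall_cat_eq fun z => by
    rw [← hw', cat_append, hw, cat_append]
  simp

theorem HasLogSlope.logSlope_eq {v : Cantor ≃ₜ Cantor} {x : Cantor} {k : ℤ}
    (h : HasLogSlope v x k) : logSlope v x = k := by
  have hex : ∃ k, HasLogSlope v x k := ⟨k, h⟩
  rw [logSlope, dif_pos hex]
  exact hex.choose_spec.unique h

theorem memV.hasLogSlope {v : Cantor ≃ₜ Cantor} (hv : memV v) (x : Cantor) :
    HasLogSlope v x (logSlope v x) := by
  obtain ⟨m, w, y, hx, hw⟩ := hv x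
  have h : HasLogSlope v x (m.length - w.length) := ⟨m, w, y, hx, hw, rfl⟩
  rwa [h.logSlope_eq]

theorem HasLogSlope.trans {v w : Cantor ≃ₜ Cantor} {x : Cantor} {k₁ k₂ : ℤ}
    (h₁ : HasLogSlope w x k₁) (h₂ : HasLogSlope v (w x) k₂) :
    HasLogSlope (w.trans v) x (k₁ + k₂) := by
  obtain ⟨m, u, y, rfl, hw, rfl⟩ := h₁
  obtain ⟨m', u', y', hx', hv, rfl⟩ := h₂
  rw [hw] at hx'
  rcases le_total u.length m'.length with hle | hle
  · obtain ⟨t, rfl, rfl⟩ := exists_eq_append_of_cat_eq hx' hle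
    refine ⟨m ++ t, u', y', (cat_append m t y').symm, fun z => ?_, by simp; ring⟩
    simp only [Homeomorph.trans_apply, cat_append, hw, ← hv]
  · obtain ⟨t, rfl, rfl⟩ := exists_eq_append_of_cat_eq hx'.symm hle
    refine ⟨m, u' ++ t, y, rfl, fun z => ?_, by simp; ring⟩
    simp only [Homeomorph.trans_apply, cat_append, hw, hv]

theorem memV_refl : memV (Homeomorph.refl Cantor) :=
  fun x => ⟨[], [], x, rfl, fun _ => rfl⟩

theorem memV.symm {v : Cantor ≃ₜ Cantor} (hv : memV v) : memV v.symm := by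
  intro x
  obtain ⟨m, w, y, hx, hw⟩ := hv (v.symm x)
  exact ⟨w, m, y, by rw [← hw, ← hx, v.apply_symm_apply],
    fun z => by rw [← hw, v.symm_apply_apply]⟩

theorem memV.trans {v w : Cantor ≃ₜ Cantor} (hw : memV w) (hv : memV v) :
    memV (w.trans v) := fun x =>
  let ⟨m, u, y, hx, hwv, _⟩ := (hw.hasLogSlope x).trans (hv.hasLogSlope (w x))
  ⟨m, u, y, hx, hwv⟩

theorem logSlope_trans {v w : Cantor ≃ₜ Cantor} (hw : memV w) (hv : memV v) (x : Cantor) :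
    logSlope (w.trans v) x = logSlope w x + logSlope v (w x) :=
  ((hw.hasLogSlope x).trans (hv.hasLogSlope (w x))).logSlope_eq

theorem logSlope_refl (x : Cantor) : logSlope (Homeomorph.refl Cantor) x = 0 :=
  HasLogSlope.logSlope_eq ⟨[], [], x, rfl, fun _ => rfl, by simp⟩

theorem memV.isLocallyConstant_logSlope {v : Cantor ≃ₜ Cantor} (hv : memV v) :
    IsLocallyConstant (logSlope v) := by
  refine (IsLocallyConstant.iff_exists_open _).2 fun x => ?_
  obtain ⟨m, w, y, hx, hw⟩ := hv x
  have hcyl : ∀ x' ∈ cyl m, logSlope v x' = m.length - w.length := by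
    rintro x' ⟨y', rfl⟩
    exact HasLogSlope.logSlope_eq ⟨m, w, y', rfl, hw, rfl⟩
  exact ⟨cyl m, isOpen_cyl m, ⟨y, hx⟩,
    fun x' hx' => (hcyl x' hx').trans (hcyl x ⟨y, hx⟩).symm⟩

theorem IsLocallyConstant.exists_forall_mem_cylinder {E : ℕ → Type*}
    [∀ n, TopologicalSpace (E n)] [∀ n, DiscreteTopology (E n)] [CompactSpace (∀ n, E n)]
    {Y : Type*} {f : (∀ n, E n) → Y} (hf : IsLocallyConstant f) :
    ∃ N, ∀ x, ∀ y ∈ PiNat.cylinder x N, f y = f x := by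
  have hloc (x : ∀ n, E n) : ∃ n, PiNat.cylinder x n ⊆ {y | f y = f x} := by
    obtain ⟨_, ⟨z, n, rfl⟩, hx, hsub⟩ :=
      (PiNat.isTopologicalBasis_cylinders E).exists_subset_of_mem_open
        (show x ∈ {y | f y = f x} from rfl) (hf.isOpen_fiber (f x))
    exact ⟨n, PiNat.mem_cylinder_iff_eq.1 hx ▸ hsub⟩
  choose n hn using hloc
  obtain ⟨t, ht⟩ := isCompact_univ.elim_nhds_subcover (fun x => PiNat.cylinder x (n x))
    fun x _ => (PiNat.isOpen_cylinder E x (n x)).mem_nhds (PiNat.self_mem_cylinder x (n x))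
  refine ⟨t.sup n, fun x y hy => ?_⟩
  obtain ⟨x₀, hx₀t, hx₀⟩ := Set.mem_iUnion₂.1 (ht.2 (Set.mem_univ x))
  have hy₀ : y ∈ PiNat.cylinder x₀ (n x₀) :=
    PiNat.mem_cylinder_iff_eq.1 hx₀ ▸ PiNat.cylinder_anti x (Finset.le_sup hx₀t) hy
  exact (hn x₀ hy₀).trans (hn x₀ hx₀).symm

def wordsOfLength (N : ℕ) : Finset (List Bool) :=
  Finset.univ.image (List.ofFn : (Fin N → Bool) → List Bool)

theorem mem_wordsOfLength {N : ℕ} {w : List Bool} : w ∈ wordsOfLength N ↔ w.length = N := by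
  refine ⟨fun h => ?_, fun h => Finset.mem_image.2 ⟨fun i => w[i], Finset.mem_univ _, ?_⟩⟩
  · obtain ⟨f, -, rfl⟩ := Finset.mem_image.1 h
    exact List.length_ofFn
  · subst h
    exact List.ofFn_getElem

theorem isSDP_wordsOfLength (N : ℕ) : IsSDP (wordsOfLength N) := by
  intro x
  refine ⟨List.ofFn fun i : Fin N => x i, ⟨mem_wordsOfLength.2 List.length_ofFn, ?_⟩, ?_⟩
  · rw [mem_cyl_iff]; simp
  · rintro w ⟨hw, hx⟩
    rw [mem_wordsOfLength] at hw
    rw [mem_cyl_iff] at hx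
    apply List.ext_getElem (by simp [hw])
    intro i hi _
    simp [← hx i hi]

theorem isLC_iff_isLocallyConstant {Γ : Type*} {f : Cantor → Γ} :
    IsLC f ↔ IsLocallyConstant f := by
  constructor
  · rintro ⟨P, hP, hf⟩
    refine (IsLocallyConstant.iff_exists_open f).2 fun x => ?_
    obtain ⟨w, ⟨hwP, hx⟩, -⟩ := hP x
    have hcyl : ∀ x' ∈ cyl w, f x' = f (cat w fun _ => false) := by
      rintro _ ⟨y, rfl⟩
      exact hf w hwP y _
    exact ⟨cyl w, isOpen_cyl w, hx, fun x' hx' => (hcyl x' hx').trans (hcyl x hx).symm⟩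
  · intro hf
    obtain ⟨N, hN⟩ := hf.exists_forall_mem_cylinder
    refine ⟨wordsOfLength N, isSDP_wordsOfLength N, fun w hw y z => hN _ _ ?_⟩
    rw [← mem_wordsOfLength.1 hw, ← cyl_eq_cylinder]
    exact ⟨y, rfl⟩

section LoopGroup

variable {Γ : Type*}

theorem IsLC.comp_continuous {f : Cantor → Γ} (hf : IsLC f) {g : Cantor → Cantor}
    (hg : Continuous g) : IsLC (f ∘ g) :=
  isLC_iff_isLocallyConstant.2 ((isLC_iff_isLocallyConstant.1 hf).comp_continuous hg)

theorem IsLC.mul [Mul Γ] {f g : Cantor → Γ} (hf : IsLC f) (hg : IsLC g) : IsLC (f * g) :=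
  isLC_iff_isLocallyConstant.2
    ((isLC_iff_isLocallyConstant.1 hf).mul (isLC_iff_isLocallyConstant.1 hg))

theorem IsLC.inv [Inv Γ] {f : Cantor → Γ} (hf : IsLC f) : IsLC f⁻¹ :=
  isLC_iff_isLocallyConstant.2 (isLC_iff_isLocallyConstant.1 hf).inv

theorem isLC_const (g : Γ) : IsLC fun _ : Cantor => g :=
  isLC_iff_isLocallyConstant.2 (IsLocallyConstant.const g)

variable [Group Γ]

theorem alphaWord_refl (m : List Bool) :
    alphaWord (MulEquiv.refl Γ) (MulEquiv.refl Γ) m = MulEquiv.refl Γ :=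
  List.foldl_fixed' (fun b => by cases b <;> rfl) m

theorem permOfU_apply (a : Cantor → Γ) (v : Cantor ≃ₜ Cantor) (x : Cantor) (g : Γ) :
    permOfU a v (x, g) = (v x, a (v x) * g) := by
  have hτ : tauEquiv (MulEquiv.refl Γ) (MulEquiv.refl Γ) v x = MulEquiv.refl Γ := by
    unfold tauEquiv
    split
    · simp only [alphaWord_refl]; rfl
    · rfl
  simp [permOfU, permOf, hτ]

theorem permOfU_mul (a b : Cantor → Γ) (v w : Cantor ≃ₜ Cantor) :
    permOfU a v * permOfU b w = permOfU (a * b ∘ v.symm) (w.trans v) := by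
  ext ⟨x, g⟩ <;> simp [permOfU_apply, mul_assoc]

theorem permOfU_one : permOfU (1 : Cantor → Γ) (Homeomorph.refl Cantor) = 1 := by
  ext ⟨x, g⟩ <;> simp [permOfU_apply]

theorem permOfU_inv (a : Cantor → Γ) (v : Cantor ≃ₜ Cantor) :
    (permOfU a v)⁻¹ = permOfU (a ∘ v)⁻¹ v.symm := by
  rw [inv_eq_iff_mul_eq_one, permOfU_mul, ← permOfU_one]
  congr
  · ext x; simp
  · ext x; simp

theorem permOfU_injective2 : Function.Injective2 (permOfU (Γ := Γ)) := by
  intro a a' v v' h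
  have hv : v = v' := Homeomorph.ext fun x => by
    simpa [permOfU_apply] using congrArg (fun p => (p (x, 1)).1) h
  subst hv
  refine ⟨funext fun y => ?_, rfl⟩
  simpa [permOfU_apply] using congrArg (fun p => (p (v.symm y, 1)).2) h

theorem mem_GsubU_iff {p : Equiv.Perm (Cantor × Γ)} :
    p ∈ GsubU Γ ↔ ∃ a v, IsLC a ∧ memV v ∧ p = permOfU a v := by
  refine ⟨fun hp => ?_, fun h => Subgroup.subset_closure h⟩
  induction hp using Subgroup.closure_induction with
  | mem p hp => exact hp
  | one => exact ⟨1, _, isLC_const 1, memV_refl, permOfU_one.symm⟩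
  | mul p q _ _ hp hq =>
    obtain ⟨a, v, ha, hv, rfl⟩ := hp
    obtain ⟨b, w, hb, hw, rfl⟩ := hq
    exact ⟨_, _, ha.mul (hb.comp_continuous v.symm.continuous), hw.trans hv,
      permOfU_mul a b v w⟩
  | inv p _ hp =>
    obtain ⟨a, v, ha, hv, rfl⟩ := hp
    exact ⟨_, _, (ha.comp_continuous v.continuous).inv, hv.symm, permOfU_inv a v⟩

end LoopGroup

theorem continuous_cat_drop (w : List Bool) (k : ℕ) :
    Continuous fun x : Cantor => cat w (Cantor.drop k x) := by
  refine continuous_pi fun n => ?_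
  unfold cat Cantor.drop
  split
  · exact continuous_const
  · exact continuous_apply _

def IsLocallyPrefixReplacement (f : Cantor → Cantor) : Prop :=
  ∀ x, ∃ (m w : List Bool) (y : Cantor), x = cat m y ∧ ∀ z, f (cat m z) = cat w z

theorem IsLocallyPrefixReplacement.continuous {f : Cantor → Cantor}
    (hf : IsLocallyPrefixReplacement f) : Continuous f := by
  refine continuous_iff_continuousAt.2 fun x => ?_
  obtain ⟨m, w, y, hx, hw⟩ := hf x
  refine (continuous_cat_drop w m.length).continuousAt.congr ?_
  filter_upwards [(isOpen_cyl m).mem_nhds ⟨y, hx⟩]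
  rintro _ ⟨z, rfl⟩
  rw [Cantor.drop_cat, hw]

def swapFun (x : Cantor) : Cantor :=
  match x 0, x 1 with
  | false, _ => cat [true, true] (Cantor.drop 1 x)
  | true, true => cat [false] (Cantor.drop 2 x)
  | true, false => x

theorem swapFun_cat_false (z : Cantor) : swapFun (cat [false] z) = cat [true, true] z :=
  congrArg (cat [true, true]) (Cantor.drop_cat [false] z)

theorem swapFun_cat_true_true (z : Cantor) : swapFun (cat [true, true] z) = cat [false] z :=
  congrArg (cat [false]) (Cantor.drop_cat [true, true] z)

theorem swapFun_cat_true_false (z : Cantor) :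
    swapFun (cat [true, false] z) = cat [true, false] z :=
  rfl

theorem cyl_cases (x : Cantor) :
    x ∈ cyl [false] ∨ x ∈ cyl [true, true] ∨ x ∈ cyl [true, false] := by
  simp only [mem_cyl_iff]
  rcases h0 : x 0 with _ | _
  · exact .inl fun | 0, _ => h0
  rcases h1 : x 1 with _ | _
  · exact .inr (.inr fun | 0, _ => h0 | 1, _ => h1)
  · exact .inr (.inl fun | 0, _ => h0 | 1, _ => h1)

theorem swapFun_involutive : Function.Involutive swapFun := by
  intro x
  rcases cyl_cases x with ⟨z, rfl⟩ | ⟨z, rfl⟩ | ⟨z, rfl⟩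
  · rw [swapFun_cat_false, swapFun_cat_true_true]
  · rw [swapFun_cat_true_true, swapFun_cat_false]
  · rw [swapFun_cat_true_false, swapFun_cat_true_false]

theorem isLocallyPrefixReplacement_swapFun : IsLocallyPrefixReplacement swapFun := by
  intro x
  rcases cyl_cases x with ⟨y, rfl⟩ | ⟨y, rfl⟩ | ⟨y, rfl⟩
  · exact ⟨_, _, y, rfl, swapFun_cat_false⟩
  · exact ⟨_, _, y, rfl, swapFun_cat_true_true⟩
  · exact ⟨_, _, y, rfl, swapFun_cat_true_false⟩

def swapV : Cantor ≃ₜ Cantor where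
  toEquiv := swapFun_involutive.toPerm
  continuous_toFun := isLocallyPrefixReplacement_swapFun.continuous
  continuous_invFun := isLocallyPrefixReplacement_swapFun.continuous

theorem memV_swapV : memV swapV := isLocallyPrefixReplacement_swapFun

theorem logSlope_swapV (z : Cantor) : logSlope swapV (cat [true, true] z) = 1 :=
  HasLogSlope.logSlope_eq ⟨_, _, z, rfl, swapFun_cat_true_true, rfl⟩

section SlopeAction

variable {Γ : Type*} [Group Γ]

noncomputable def slopePow (ζ : Γ) (v : Cantor ≃ₜ Cantor) (x : Cantor) : Γ :=
  ζ ^ logSlope v (v.symm x)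

theorem isLC_slopePow (ζ : Γ) {v : Cantor ≃ₜ Cantor} (hv : memV v) : IsLC (slopePow ζ v) :=
  isLC_iff_isLocallyConstant.2
    ((hv.isLocallyConstant_logSlope.comp_continuous v.symm.continuous).comp (ζ ^ ·))

theorem slopePow_trans (ζ : Γ) {v w : Cantor ≃ₜ Cantor} (hv : memV v) (hw : memV w)
    (y : Cantor) : slopePow ζ (w.trans v) y = slopePow ζ v y * slopePow ζ w (v.symm y) := by
  simp only [slopePow, Homeomorph.symm_trans_apply, logSlope_trans hw hv,
    Homeomorph.apply_symm_apply, add_comm (logSlope w _), zpow_add]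

theorem slopePow_refl (ζ : Γ) : slopePow ζ (Homeomorph.refl Cantor) = 1 :=
  funext fun _ => by simp [slopePow, logSlope_refl]

theorem slopePow_one (v : Cantor ≃ₜ Cantor) : slopePow (1 : Γ) v = 1 :=
  funext fun _ => one_zpow _

theorem slopePow_mul {ζ η : Γ} (h : Commute ζ η) (v : Cantor ≃ₜ Cantor) :
    slopePow (ζ * η) v = slopePow ζ v * slopePow η v :=
  funext fun _ => h.mul_zpow _

theorem GsubU.exists_eq_permOfU (p : GsubU Γ) :
    ∃ av : (Cantor → Γ) × (Cantor ≃ₜ Cantor),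
      IsLC av.1 ∧ memV av.2 ∧ (p : Equiv.Perm (Cantor × Γ)) = permOfU av.1 av.2 :=
  let ⟨a, v, ha, hv, h⟩ := mem_GsubU_iff.1 p.2
  ⟨(a, v), ha, hv, h⟩

/-- `F_ζ`, evaluated on a normal form `a·v` of `p` chosen once and for all; `coe_slopeTwist`
shows that any other normal form gives the same result. -/
noncomputable def slopeTwist (ζ : Γ) (p : GsubU Γ) : GsubU Γ :=
  let av := (GsubU.exists_eq_permOfU p).choose
  have hav : IsLC av.1 ∧ memV av.2 ∧ _ := (GsubU.exists_eq_permOfU p).choose_spec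
  ⟨permOfU (slopePow ζ av.2 * av.1) av.2,
    mem_GsubU_iff.2 ⟨_, _, (isLC_slopePow ζ hav.2.1).mul hav.1, hav.2.1, rfl⟩⟩

theorem coe_slopeTwist (ζ : Γ) {p : GsubU Γ} {a : Cantor → Γ} {v : Cantor ≃ₜ Cantor}
    (hp : (p : Equiv.Perm (Cantor × Γ)) = permOfU a v) :
    (slopeTwist ζ p : Equiv.Perm (Cantor × Γ)) = permOfU (slopePow ζ v * a) v := by
  obtain ⟨ha, hv⟩ :=
    permOfU_injective2 ((GsubU.exists_eq_permOfU p).choose_spec.2.2.symm.trans hp)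
  simp only [slopeTwist, ha, hv]

theorem slopeTwist_one_left (p : GsubU Γ) : slopeTwist 1 p = p := Subtype.ext <| by
  obtain ⟨_, _, -, -, hp⟩ := mem_GsubU_iff.1 p.2
  rw [coe_slopeTwist _ hp, hp, slopePow_one, one_mul]

theorem slopeTwist_mul_left {ζ η : Γ} (h : Commute ζ η) (p : GsubU Γ) :
    slopeTwist (ζ * η) p = slopeTwist ζ (slopeTwist η p) := Subtype.ext <| by
  obtain ⟨_, v, -, -, hp⟩ := mem_GsubU_iff.1 p.2
  rw [coe_slopeTwist _ (coe_slopeTwist _ hp), coe_slopeTwist _ hp, slopePow_mul h v, mul_assoc]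

theorem slopeTwist_one_right (ζ : Γ) : slopeTwist ζ 1 = 1 := Subtype.ext <| by
  rw [coe_slopeTwist _ permOfU_one.symm, slopePow_refl, one_mul, permOfU_one]
  rfl

theorem slopeTwist_mul_right {ζ : Γ} (hζ : ζ ∈ Subgroup.center Γ) (p q : GsubU Γ) :
    slopeTwist ζ (p * q) = slopeTwist ζ p * slopeTwist ζ q := Subtype.ext <| by
  obtain ⟨a, v, -, hv, hp⟩ := mem_GsubU_iff.1 p.2
  obtain ⟨b, w, -, hw, hq⟩ := mem_GsubU_iff.1 q.2
  have hpq : ((p * q : GsubU Γ) : Equiv.Perm (Cantor × Γ)) =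
      permOfU (a * b ∘ v.symm) (w.trans v) := by
    rw [Subgroup.coe_mul, hp, hq, permOfU_mul]
  rw [coe_slopeTwist _ hpq, Subgroup.coe_mul, coe_slopeTwist _ hp, coe_slopeTwist _ hq,
    permOfU_mul]
  congr 1
  funext y
  have hζa : Commute ζ (a y) := (Subgroup.mem_center_iff.1 hζ (a y)).symm
  have hcomm : Commute (slopePow ζ w (v.symm y)) (a y) := hζa.zpow_left _
  simp only [Pi.mul_apply, Function.comp_apply, slopePow_trans _ hv hw, mul_assoc,
    hcomm.left_comm]

noncomputable instance : MulDistribMulAction (Subgroup.center Γ) (GsubU Γ) where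
  smul ζ p := slopeTwist ζ p
  one_smul := slopeTwist_one_left
  mul_smul ζ η := slopeTwist_mul_left (Subgroup.mem_center_iff.1 η.2 ζ)
  smul_mul ζ := slopeTwist_mul_right ζ.2
  smul_one ζ := slopeTwist_one_right (ζ : Γ)

theorem eq_one_of_forall_slopeTwist_eq {ζ : Γ} (h : ∀ p : GsubU Γ, slopeTwist ζ p = p) :
    ζ = 1 := by
  have hmem : permOfU (1 : Cantor → Γ) swapV ∈ GsubU Γ :=
    mem_GsubU_iff.2 ⟨1, swapV, isLC_const 1, memV_swapV, rfl⟩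
  have hfix := congrArg Subtype.val (h ⟨_, hmem⟩)
  rw [coe_slopeTwist ζ rfl] at hfix
  have := congrFun (permOfU_injective2 hfix).1 (swapV (cat [true, true] fun _ => false))
  simpa [slopePow, logSlope_swapV] using this

end SlopeAction

/-- (Untwisted case `α₀ = α₁ = id`.)  For `ζ ∈ Z(Γ)`, the formula
`F_ζ(a·v) = ζ^{ℓ_v} · a · v` with `ℓ_v(x) = log₂ v'(v⁻¹x)` defines an automorphism of the
untwisted fraction group `G = LΓ ⋊ V`, and `ζ ↦ F_ζ` is a faithful action of `Z(Γ)` on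
`G` by automorphisms. -/
theorem slope_action_of_center (Γ : Type*) [Group Γ] :
    ∃ F : Subgroup.center Γ →* MulAut ↥(GsubU Γ),
      Function.Injective F ∧
      ∀ (ζ : Subgroup.center Γ) (a : Cantor → Γ) (v : Cantor ≃ₜ Cantor),
        IsLC a → memV v → ∀ h : permOfU a v ∈ GsubU Γ,
          ((F ζ ⟨permOfU a v, h⟩ : ↥(GsubU Γ)) : Equiv.Perm (Cantor × Γ)) =
            permOfU (fun x => (ζ : Γ) ^ (logSlope v (v.symm x)) * a x) v := by
  refine ⟨MulDistribMulAction.toMulAut _ _, (injective_iff_map_eq_one _).2 fun ζ hζ => ?_,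
    fun ζ _ _ _ _ h => coe_slopeTwist (ζ : Γ) (p := ⟨_, h⟩) rfl⟩
  exact Subtype.ext (eq_one_of_forall_slopeTwist_eq fun p => DFunLike.congr_fun hζ p)
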